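/- arXiv:2508.13016 — 5 statements merged into one kernel-verified Lean document; each statement's English description precedes it below -/
import Mathlib

section
/- Let (x_n) be a nonincreasing summable sequence of positive reals with x_n ≤ r_n for all n (interval-filling), and suppose its cardinal function f satisfies rng(f) = {1, m} for some m ≥ 3. Then 2·x_k ≤ r_k for every k, where r_k = ∑_{n>k} x_n. -/
open Set

/-- The achievement set of a sequence: all subsums. -/
noncomputable def achSet (x : ℕ → ℝ) : Set ℝ :=
  {t | ∃ S : Set ℕ, ∑' n : S, x n = t}

/-- The cardinal function: the number of representations of `t` as a subsum. -/
noncomputable def cardFun (x : ℕ → ℝ) (t : ℝ) : Cardinal :=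
  Cardinal.mk {S : Set ℕ // ∑' n : S, x n = t}

/-- The tail sum `r_k = ∑_{n > k} x n`. -/
noncomputable def tailSum (x : ℕ → ℝ) (k : ℕ) : ℝ := ∑' n, x (k + 1 + n)

/-- Prepending a term to a sequence. -/
def prepend (y : ℝ) (x : ℕ → ℝ) : ℕ → ℝ := fun n =>
  match n with
  | 0 => y
  | Nat.succ m => x m

/-!
Suppose `r_k < 2 x_k` and put `G = ∑_{j ≤ k} x_j`. Interval-filling makes every `s ∈ [0, r_k]` a
subsum of the tail `(x_n)_{n > k}` (greedy expansion). For `w > r_k - x_k` a subset missing some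
`j ≤ k` sums to at most `G - x_k + r_k < G + w`, so `G + w` has exactly as many representations
as `w` has in the tail. As `r_k - x_k < r_k / 2`, complementation inside the tail reaches every
`s ∈ [0, r_k]` from such a `w`: all tail counts lie in `{1, m}`.

If `x_j > x_k` for all `j < k`, the representations of `x_k` are `{k}` and its tail
representations; their number `g + 1` with `g ∈ {1, m}` is neither `1` nor `m ≥ 3`. So
`x_j = x_k` for some `j < k`. Then `x_{k+1}`, represented by `{k+1}` and by a subset of
`(k+1, ∞)`, has at least two, hence `m`, tail representations `B`, and `∑_{i < k} x_i + x_{k+1}`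
gets the `2m > m` representations `{i < k} ∪ B` and `({i ≤ k} \ {j}) ∪ B`.
-/

open Filter Topology Cardinal

namespace Subsum

variable {α : Type*} {x : α → ℝ} {S U T P A : Set α} {s t : ℝ}

theorem tsum_union (hsum : Summable x) (hd : Disjoint S U) :
    ∑' n : ↑(S ∪ U), x n = ∑' n : S, x n + ∑' n : U, x n :=
  (hsum.subtype S).tsum_union_disjoint hd (hsum.subtype U)

theorem tsum_sdiff (hsum : Summable x) (h : S ⊆ U) :
    ∑' n : ↑(U \ S), x n = ∑' n : U, x n - ∑' n : S, x n := by
  rw [eq_sub_iff_add_eq', ← tsum_union hsum disjoint_sdiff_right, union_sdiff_cancel h]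

theorem tsum_mono (hx : 0 ≤ x) (hsum : Summable x) (h : S ⊆ U) :
    ∑' n : S, x n ≤ ∑' n : U, x n :=
  sub_nonneg.1 <| tsum_sdiff hsum h ▸ tsum_nonneg fun n => hx n

theorem eq_of_subset_of_tsum_le (hpos : ∀ n, 0 < x n) (hsum : Summable x) (h : S ⊆ U)
    (hle : ∑' n : U, x n ≤ ∑' n : S, x n) : S = U := by
  by_contra hne
  obtain ⟨a, haU, haS⟩ := exists_of_ssubset (h.ssubset_of_ne hne)
  have hx : 0 ≤ x := fun n => (hpos n).le
  have : x a ≤ ∑' n : ↑(U \ S), x n := by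
    simpa using tsum_mono hx hsum (singleton_subset_iff.2 (mem_sdiff_of_mem haU haS))
  linarith [hpos a, tsum_sdiff hsum h]

theorem tsum_inter_add_tsum_inter_compl (hsum : Summable x) (S P : Set α) :
    ∑' n : ↑(S ∩ P), x n + ∑' n : ↑(S ∩ Pᶜ), x n = ∑' n : S, x n := by
  rw [← tsum_union hsum ((disjoint_compl_right (a := P)).mono inter_subset_right
    inter_subset_right), inter_union_compl]

abbrev Reps (x : α → ℝ) (T : Set α) (s : ℝ) : Type _ :=
  {B : Set α // B ⊆ T ∧ ∑' n : B, x n = s}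

namespace Reps

def complEquiv (hsum : Summable x) : Reps x T s ≃ Reps x T (∑' n : T, x n - s) where
  toFun B := ⟨T \ B.1, sdiff_subset, by rw [tsum_sdiff hsum B.2.1, B.2.2]⟩
  invFun B := ⟨T \ B.1, sdiff_subset, by rw [tsum_sdiff hsum B.2.1, B.2.2, sub_sub_cancel]⟩
  left_inv B := Subtype.ext (sdiff_sdiff_cancel_left B.2.1)
  right_inv B := Subtype.ext (sdiff_sdiff_cancel_left B.2.1)

def addPrefix (hsum : Summable x) (hA : A ⊆ P) (ht : ∑' n : A, x n + s = t)
    (B : Reps x Pᶜ s) : {S : Set α // ∑' n : S, x n = t} :=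
  ⟨A ∪ B.1, by rw [tsum_union hsum (disjoint_compl_right.mono hA B.2.1), B.2.2, ht]⟩

theorem addPrefix_inter (hsum : Summable x) (hA : A ⊆ P) (ht : ∑' n : A, x n + s = t)
    (B : Reps x Pᶜ s) : (addPrefix hsum hA ht B).1 ∩ P = A := by
  rw [addPrefix, union_inter_distrib_right, inter_eq_left.2 hA,
    (disjoint_compl_left.mono_left B.2.1).inter_eq, union_empty]

theorem addPrefix_inter_compl (hsum : Summable x) (hA : A ⊆ P) (ht : ∑' n : A, x n + s = t)
    (B : Reps x Pᶜ s) : (addPrefix hsum hA ht B).1 ∩ Pᶜ = B.1 := by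
  rw [addPrefix, union_inter_distrib_right, inter_eq_left.2 B.2.1,
    (disjoint_compl_right.mono_left hA).inter_eq, empty_union]

theorem addPrefix_injective (hsum : Summable x) (hA : A ⊆ P) (ht : ∑' n : A, x n + s = t) :
    Function.Injective (addPrefix hsum hA ht) := fun B B' h => Subtype.ext <| by
  rw [← addPrefix_inter_compl hsum hA ht B, h, addPrefix_inter_compl]

def equivOfInterEq (hsum : Summable x) (hA : A ⊆ P) (ht : ∑' n : A, x n + s = t)
    (hP : ∀ S : Set α, ∑' n : S, x n = t → S ∩ P = A) :
    {S : Set α // ∑' n : S, x n = t} ≃ Reps x Pᶜ s where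
  toFun S := ⟨S.1 ∩ Pᶜ, inter_subset_right, by
    have hsplit := tsum_inter_add_tsum_inter_compl hsum S.1 P
    rw [hP S.1 S.2] at hsplit
    linarith [S.2]⟩
  invFun := addPrefix hsum hA ht
  left_inv S := Subtype.ext <| by
    change A ∪ S.1 ∩ Pᶜ = S.1
    rw [← hP S.1 S.2, inter_union_compl]
  right_inv B := Subtype.ext <| addPrefix_inter_compl hsum hA ht B

end Reps

end Subsum

open Subsum

theorem tailSum_eq_tsum_nat_add (y : ℕ → ℝ) (n : ℕ) :
    tailSum y n = ∑' i, y (i + (n + 1)) :=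
  tsum_congr fun i => by rw [add_comm]

theorem tsum_nat_add_eq_add_tsum_succ {y : ℕ → ℝ} (hsum : Summable y) (n : ℕ) :
    ∑' i, y (i + n) = y n + ∑' i, y (i + (n + 1)) := by
  rw [((summable_nat_add_iff n).2 hsum).tsum_eq_zero_add, zero_add]
  exact congrArg _ (tsum_congr fun i => by rw [add_right_comm, add_assoc])

namespace Greedy

variable {y : ℕ → ℝ} {s : ℝ}

noncomputable def rem (y : ℕ → ℝ) (s : ℝ) : ℕ → ℝ
  | 0 => s
  | n + 1 => if y n ≤ rem y s n then rem y s n - y n else rem y s n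

def chosen (y : ℕ → ℝ) (s : ℝ) : Set ℕ := {n | y n ≤ rem y s n}

theorem sum_range_indicator_chosen (n : ℕ) :
    ∑ i ∈ Finset.range n, (chosen y s).indicator y i = s - rem y s n := by
  induction n with
  | zero => simp [rem]
  | succ n ih =>
    rw [Finset.sum_range_succ, ih, rem]
    by_cases h : y n ≤ rem y s n
    · rw [indicator_of_mem (show n ∈ chosen y s from h), if_pos h]; ring
    · rw [indicator_of_notMem (show n ∉ chosen y s from h), if_neg h]; ring

theorem rem_mem_Icc (hsum : Summable y) (hfill : ∀ n, y n ≤ tailSum y n) (hs0 : 0 ≤ s)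
    (hs : s ≤ ∑' i, y i) (n : ℕ) : rem y s n ∈ Icc 0 (∑' i, y (i + n)) := by
  induction n with
  | zero => simpa [rem] using ⟨hs0, hs⟩
  | succ n ih =>
    have hsplit := tsum_nat_add_eq_add_tsum_succ hsum n
    have hfill_n := tailSum_eq_tsum_nat_add y n ▸ hfill n
    simp only [rem]
    split_ifs with h
    · constructor <;> linarith [ih.2]
    · -- a skipped `y n` exceeds the remainder, and interval-filling bounds it by the next tail
      constructor <;> linarith [ih.1]

theorem hasSum_indicator_chosen (hsum : Summable y) (hfill : ∀ n, y n ≤ tailSum y n)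
    (hs0 : 0 ≤ s) (hs : s ≤ ∑' i, y i) : HasSum ((chosen y s).indicator y) s := by
  have hrem : Tendsto (rem y s) atTop (𝓝 0) :=
    squeeze_zero (fun n => (rem_mem_Icc hsum hfill hs0 hs n).1)
      (fun n => (rem_mem_Icc hsum hfill hs0 hs n).2) (tendsto_sum_nat_add y)
  rw [(hsum.indicator _).hasSum_iff_tendsto_nat]
  simpa [sum_range_indicator_chosen] using tendsto_const_nhds.sub hrem

end Greedy

theorem add_one_notMem_pair {m : ℕ} (hm : 3 ≤ m) {g : Cardinal}
    (hg : g ∈ ({1, (m : Cardinal)} : Set Cardinal)) :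
    g + 1 ∉ ({1, (m : Cardinal)} : Set Cardinal) := by
  simp only [Set.mem_insert_iff, Set.mem_singleton_iff] at hg ⊢
  rcases hg with rfl | rfl <;> norm_cast <;> omega

theorem not_add_self_le_of_mem_pair {m : ℕ} (hm : 1 ≤ m) {c : Cardinal}
    (hc : c ∈ ({1, (m : Cardinal)} : Set Cardinal)) : ¬ (m : Cardinal) + m ≤ c := by
  simp only [Set.mem_insert_iff, Set.mem_singleton_iff] at hc
  rcases hc with rfl | rfl <;> norm_cast <;> omega

section

variable {x : ℕ → ℝ} {k : ℕ} {s : ℝ}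

theorem mem_achSet_iff_cardFun_ne_zero {t : ℝ} : t ∈ achSet x ↔ cardFun x t ≠ 0 := by
  rw [cardFun, mk_ne_zero_iff, nonempty_subtype]
  rfl

theorem tsum_Ioi_eq_tailSum (x : ℕ → ℝ) (k : ℕ) : ∑' n : Ioi k, x n = tailSum x k := by
  have hrange : range (k + 1 + ·) = Ioi k := by
    ext n
    simp only [mem_range, mem_Ioi]
    exact ⟨by rintro ⟨i, rfl⟩; omega, fun h => ⟨n - (k + 1), by omega⟩⟩
  rw [← hrange, tsum_range x (add_right_injective (k + 1)), tailSum]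

theorem nonempty_reps_Ioi (hsum : Summable x) (hIF : ∀ n, x n ≤ tailSum x n) (k : ℕ)
    (hs0 : 0 ≤ s) (hs : s ≤ tailSum x k) : Nonempty (Reps x (Ioi k) s) := by
  let y := fun i => x (k + 1 + i)
  have hfill : ∀ n, y n ≤ tailSum y n := fun n =>
    (hIF (k + 1 + n)).trans_eq (tsum_congr fun i => by simp only [y]; congr 1; omega)
  have hB := (Greedy.hasSum_indicator_chosen (hsum.comp_injective (add_right_injective (k + 1)))
    hfill hs0 hs).tsum_eq
  refine ⟨⟨(k + 1 + ·) '' Greedy.chosen y s, ?_, ?_⟩⟩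
  · rintro _ ⟨i, -, rfl⟩
    simp only [mem_Ioi]
    omega
  · rw [tsum_image x (add_right_injective _).injOn]
    exact (tsum_subtype _ y).trans hB

theorem cardFun_tsum_Iic_add (hpos : ∀ n, 0 < x n) (hanti : ∀ n, x (n + 1) ≤ x n)
    (hsum : Summable x) {w : ℝ} (hw : tailSum x k - x k < w) :
    cardFun x (∑' n : Iic k, x n + w) = #(Reps x (Ioi k) w) := by
  have hx : 0 ≤ x := fun n => (hpos n).le
  rw [← compl_Iic]
  refine mk_congr (Reps.equivOfInterEq hsum subset_rfl rfl fun S hS => ?_)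
  refine inter_eq_right.2 fun j hj => ?_
  by_contra hjS
  have hhead : ∑' n : ↑(S ∩ Iic k), x n ≤ ∑' n : ↑(Iic k \ {j}), x n :=
    tsum_mono hx hsum fun n hn => ⟨hn.2, fun h => hjS (h ▸ hn.1)⟩
  have htail : ∑' n : ↑(S ∩ (Iic k)ᶜ), x n ≤ tailSum x k := by
    rw [← tsum_Ioi_eq_tailSum, ← compl_Iic]
    exact tsum_mono hx hsum inter_subset_right
  rw [tsum_sdiff hsum (singleton_subset_iff.2 hj), tsum_singleton] at hhead
  have hsplit := tsum_inter_add_tsum_inter_compl hsum S (Iic k)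
  have hjk : x k ≤ x j := antitone_nat_of_succ_le hanti hj
  linarith

theorem card_reps_Ioi_mem {V : Set Cardinal} (hpos : ∀ n, 0 < x n)
    (hanti : ∀ n, x (n + 1) ≤ x n) (hsum : Summable x) (hIF : ∀ n, x n ≤ tailSum x n)
    (hV : MapsTo (cardFun x) (achSet x) V) (hk : tailSum x k < 2 * x k) (hs0 : 0 ≤ s)
    (hs : s ≤ tailSum x k) : #(Reps x (Ioi k) s) ∈ V := by
  have hwindow : ∀ w, tailSum x k - x k < w → w ≤ tailSum x k →
      #(Reps x (Ioi k) w) ∈ V := by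
    intro w hw hw'
    have hcard := cardFun_tsum_Iic_add hpos hanti hsum hw
    rw [← hcard]
    refine hV (mem_achSet_iff_cardFun_ne_zero.2 ?_)
    rw [hcard, mk_ne_zero_iff]
    exact nonempty_reps_Ioi hsum hIF k (by linarith [hIF k]) hw'
  rcases lt_or_ge (tailSum x k - x k) s with h | h
  · exact hwindow s h hs
  · rw [mk_congr (Reps.complEquiv hsum), tsum_Ioi_eq_tailSum]
    exact hwindow _ (by linarith) (by linarith)

theorem cardFun_self_eq_card_reps_Ioi_add_one (hpos : ∀ n, 0 < x n) (hsum : Summable x)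
    (hlt : ∀ j < k, x k < x j) : cardFun x (x k) = #(Reps x (Ioi k) (x k)) + 1 := by
  have hx : 0 ≤ x := fun n => (hpos n).le
  let φ : Option (Reps x (Ioi k) (x k)) → {S : Set ℕ // ∑' n : S, x n = x k} :=
    fun o => o.elim ⟨{k}, tsum_singleton k x⟩ fun B => ⟨B.1, B.2.2⟩
  have hφ : φ.Bijective := by
    refine ⟨?_, ?_⟩
    · rintro (_ | B) (_ | B') h
      · rfl
      · exact absurd (B'.2.1 (congrArg Subtype.val h ▸ rfl : k ∈ B'.1)) (lt_irrefl k)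
      · exact absurd (B.2.1 (congrArg Subtype.val h ▸ rfl : k ∈ B.1)) (lt_irrefl k)
      · have hval : (φ (some B)).1 = (φ (some B')).1 := congrArg Subtype.val h
        exact congrArg some (Subtype.ext hval)
    · rintro ⟨S, hS⟩
      by_cases hkS : k ∈ S
      · refine ⟨none, Subtype.ext ?_⟩
        show {k} = S
        exact eq_of_subset_of_tsum_le hpos hsum (singleton_subset_iff.2 hkS)
          (by rw [hS, tsum_singleton])
      · refine ⟨some ⟨S, fun n hn => ?_, hS⟩, rfl⟩
        rcases lt_trichotomy n k with hnk | rfl | hnk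
        · have := tsum_mono hx hsum (singleton_subset_iff.2 hn)
          rw [tsum_singleton, hS] at this
          exact absurd this (hlt n hnk).not_ge
        · exact absurd hn hkS
        · exact hnk
  rw [← mk_option]
  exact (mk_congr (Equiv.ofBijective φ hφ)).symm

theorem two_le_card_reps_Ioi (hpos : ∀ n, 0 < x n) (hsum : Summable x)
    (hIF : ∀ n, x n ≤ tailSum x n) (k : ℕ) : 2 ≤ #(Reps x (Ioi k) (x (k + 1))) := by
  obtain ⟨B⟩ := nonempty_reps_Ioi hsum hIF (k + 1) (hpos _).le (hIF _)
  rw [two_le_iff]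
  refine ⟨⟨{k + 1}, by simp, tsum_singleton _ _⟩,
    ⟨B.1, B.2.1.trans (Ioi_subset_Ioi k.le_succ), B.2.2⟩, fun h => ?_⟩
  exact lt_irrefl (k + 1) (B.2.1 (congrArg Subtype.val h ▸ rfl : k + 1 ∈ B.1))

theorem card_reps_Ioi_add_self_le_cardFun (hsum : Summable x) {j : ℕ} (hjk : j < k)
    (hj : x j = x k) (s : ℝ) :
    #(Reps x (Ioi k) s) + #(Reps x (Ioi k) s) ≤ cardFun x (∑' n : Iio k, x n + s) := by
  have hIic : ∑' n : Iic k, x n = ∑' n : Iio k, x n + x k := by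
    rw [← Iio_union_right, tsum_union hsum (disjoint_singleton_right.2 self_notMem_Iio),
      tsum_singleton]
  have hdrop : ∑' n : ↑(Iic k \ {j}), x n + s = ∑' n : Iio k, x n + s := by
    rw [tsum_sdiff hsum (singleton_subset_iff.2 (mem_Iic.2 hjk.le)), tsum_singleton, hIic, hj]
    ring
  rw [← compl_Iic]
  have hinj := (Reps.addPrefix_injective hsum Iio_subset_Iic_self rfl).sumElim
    (Reps.addPrefix_injective hsum sdiff_subset hdrop) fun B B' h => by
      have hpre := congrArg (· ∩ Iic k) (congrArg Subtype.val h)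
      simp only [Reps.addPrefix_inter] at hpre
      have hk : k ∈ Iic k \ {j} := ⟨self_mem_Iic, hjk.ne'⟩
      rw [← hpre] at hk
      exact self_notMem_Iio hk
  have hcard := mk_le_of_injective hinj
  rwa [mk_sum, lift_id] at hcard

theorem exists_lt_eq_of_tailSum_lt_two_mul {m : ℕ} (hm : 3 ≤ m) (hpos : ∀ n, 0 < x n)
    (hanti : ∀ n, x (n + 1) ≤ x n) (hsum : Summable x) (hIF : ∀ n, x n ≤ tailSum x n)
    (hV : MapsTo (cardFun x) (achSet x) {1, (m : Cardinal)}) (hk : tailSum x k < 2 * x k) :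
    ∃ j < k, x j = x k := by
  by_contra! hne
  have hcard := cardFun_self_eq_card_reps_Ioi_add_one hpos hsum fun j hj =>
    (antitone_nat_of_succ_le hanti hj.le).lt_of_ne' (hne j hj)
  refine add_one_notMem_pair hm
    (card_reps_Ioi_mem hpos hanti hsum hIF hV hk (hpos k).le (hIF k)) ?_
  rw [← hcard]
  exact hV ⟨{k}, tsum_singleton k x⟩

end

theorem stmt1 (x : ℕ → ℝ) (hpos : ∀ n, 0 < x n) (hanti : ∀ n, x (n + 1) ≤ x n)
    (hsum : Summable x) (hIF : ∀ n, x n ≤ tailSum x n)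
    (m : ℕ) (hm : 3 ≤ m)
    (hrng : cardFun x '' achSet x = {1, (m : Cardinal)}) :
    ∀ k, 2 * x k ≤ tailSum x k := by
  have hV : MapsTo (cardFun x) (achSet x) {1, (m : Cardinal)} :=
    mapsTo_iff_image_subset.2 hrng.le
  intro k
  by_contra! hk
  obtain ⟨j, hjk, hj⟩ := exists_lt_eq_of_tailSum_lt_two_mul hm hpos hanti hsum hIF hV hk
  have hxk1 : x (k + 1) ≤ tailSum x k := by
    rw [← tsum_Ioi_eq_tailSum, ← tsum_singleton (k + 1) x]
    exact tsum_mono (fun n => (hpos n).le) hsum (by simp)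
  have hcard_m : #(Reps x (Ioi k) (x (k + 1))) = m := by
    rcases card_reps_Ioi_mem hpos hanti hsum hIF hV hk (hpos _).le hxk1 with h | h
    · exact absurd (h ▸ two_le_card_reps_Ioi hpos hsum hIF k) (by norm_num)
    · exact h
  have hle := card_reps_Ioi_add_self_le_cardFun hsum hjk hj (x (k + 1))
  rw [hcard_m] at hle
  refine not_add_self_le_of_mem_pair (by omega) (hV ?_) hle
  rw [mem_achSet_iff_cardFun_ne_zero]
  have hm0 : (0 : Cardinal) < m + m := by norm_cast; omega
  exact (hm0.trans_le hle).ne'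
end

section
/- Let (x_n) be an interval-filling sequence of positive reals and suppose r_k > x_k for some index k, where r_k = ∑_{n>k} x_n. Then there exists a point x in the achievement set with at least 3 distinct representations as a subsum, i.e., the cardinal function satisfies max rng(f) ≥ 3. -/
open Set

/-!
Pick `n > k` with `x n < r_k - x k` and put `t = x k + x n`. Every `0 ≤ c ≤ r_m` is a subsum
of the terms after `m` (greedy algorithm: interval filling keeps the remainder below the
current tail, which tends to `0`). Hence `t` is represented by `{k, n}`, by `{k} ∪ T` with `T`
a representation of `x n ≤ r_n` beyond `n`, and by a set `U` beyond `k` since `t ≤ r_k`;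
the first two differ at `n` and both contain `k ∉ U`.
-/

open Filter Topology

lemma Cardinal.three_le_mk_subtype {α : Type*} {p : α → Prop} {a b c : α}
    (ha : p a) (hb : p b) (hc : p c) (hab : a ≠ b) (hac : a ≠ c) (hbc : b ≠ c) :
    3 ≤ Cardinal.mk {x // p x} :=
  calc (3 : Cardinal) = Cardinal.mk ({a, b, c} : Set α) := by
        rw [mk_insert (by simp [hab, hac]), mk_insert (by simpa), mk_singleton]; norm_num
    _ ≤ Cardinal.mk {x | p x} := mk_le_mk_of_subset (by simp [insert_subset_iff, ha, hb, hc])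

lemma Summable.tsum_insert_of_notMem {β : Type*} {f : β → ℝ} (hf : Summable f) {a : β}
    {s : Set β} (ha : a ∉ s) : ∑' b : ↥(insert a s), f b = f a + ∑' b : s, f b := by
  rw [insert_eq, Summable.tsum_union_disjoint (disjoint_singleton_left.2 ha)
    (hf.subtype _) (hf.subtype _), tsum_singleton]

section Greedy

variable {x : ℕ → ℝ} {c : ℝ}

/-- The greedy algorithm for representing `c` takes `x j` whenever it still fits into the
remainder; `greedyRem x c j` is what is left after the indices `< j` have been decided. -/
noncomputable def greedyRem (x : ℕ → ℝ) (c : ℝ) : ℕ → ℝ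
  | 0 => c
  | j + 1 => if x j ≤ greedyRem x c j then greedyRem x c j - x j else greedyRem x c j

def greedySet (x : ℕ → ℝ) (c : ℝ) : Set ℕ := {j | x j ≤ greedyRem x c j}

lemma greedyRem_succ (j : ℕ) :
    greedyRem x c (j + 1) = greedyRem x c j - (greedySet x c).indicator x j := by
  by_cases h : x j ≤ greedyRem x c j <;> simp [greedyRem, greedySet, h]

lemma sum_range_indicator_greedySet (j : ℕ) :
    ∑ i ∈ Finset.range j, (greedySet x c).indicator x i = c - greedyRem x c j := by
  induction j with
  | zero => simp [greedyRem]
  | succ j ih => rw [Finset.sum_range_succ, ih, greedyRem_succ]; ring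

lemma tsum_nat_add_eq_add_tailSum (hsum : Summable x) (j : ℕ) :
    ∑' m, x (m + j) = x j + tailSum x j := by
  rw [((summable_nat_add_iff j).2 hsum).tsum_eq_zero_add, zero_add, tailSum]
  congr 1
  exact tsum_congr fun m => by ring_nf

lemma greedyRem_mem_Icc (hsum : Summable x) (hIF : ∀ n, x n ≤ tailSum x n)
    (h0 : 0 ≤ c) (hc : c ≤ ∑' n, x n) (j : ℕ) :
    greedyRem x c j ∈ Icc 0 (∑' m, x (m + j)) := by
  induction j with
  | zero => exact ⟨h0, hc⟩
  | succ j ih =>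
    have htail := tsum_nat_add_eq_add_tailSum hsum j
    have hnext : ∑' m, x (m + (j + 1)) = tailSum x j := by
      rw [tailSum]; exact tsum_congr fun m => by ring_nf
    rw [hnext]
    by_cases h : x j ≤ greedyRem x c j
    · simp only [greedyRem, if_pos h]
      constructor <;> linarith [ih.2]
    · simp only [greedyRem, if_neg h]
      exact ⟨ih.1, by linarith [hIF j]⟩

lemma hasSum_indicator_greedySet (hnn : ∀ n, 0 ≤ x n) (hsum : Summable x)
    (hIF : ∀ n, x n ≤ tailSum x n) (h0 : 0 ≤ c) (hc : c ≤ ∑' n, x n) :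
    HasSum ((greedySet x c).indicator x) c := by
  have hrem := greedyRem_mem_Icc hsum hIF h0 hc
  have hlim : Tendsto (greedyRem x c) atTop (𝓝 0) :=
    squeeze_zero (fun j => (hrem j).1) (fun j => (hrem j).2) (tendsto_sum_nat_add x)
  rw [hasSum_iff_tendsto_nat_of_nonneg (indicator_nonneg fun n _ => hnn n)]
  simp_rw [sum_range_indicator_greedySet]
  simpa using (tendsto_const_nhds (x := c)).sub hlim

end Greedy

lemma tailSum_nat_add (x : ℕ → ℝ) (n j : ℕ) :
    tailSum (fun m => x (n + m)) j = tailSum x (n + j) := by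
  simp only [tailSum, add_assoc]

lemma exists_subset_Ioi_tsum_eq {x : ℕ → ℝ} (hnn : ∀ n, 0 ≤ x n) (hsum : Summable x)
    (hIF : ∀ n, x n ≤ tailSum x n) {n : ℕ} {c : ℝ} (h0 : 0 ≤ c) (hc : c ≤ tailSum x n) :
    ∃ S ⊆ Ioi n, ∑' m : S, x m = c := by
  set g : ℕ → ℕ := fun m => n + 1 + m
  have hg : Function.Injective g := add_right_injective (n + 1)
  have hS := hasSum_indicator_greedySet (x := x ∘ g) (fun m => hnn _)
    ((summable_nat_add_iff (n + 1)).2 hsum |>.congr fun m => by simp [g, add_comm])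
    (fun j => by simpa only [g, Function.comp_def, tailSum_nat_add] using hIF (n + 1 + j)) h0 hc
  refine ⟨g '' greedySet (x ∘ g) c, ?_, ?_⟩
  · rintro _ ⟨m, -, rfl⟩
    show n < n + 1 + m
    omega
  · refine (hasSum_subtype_iff_indicator.2 ((hg.hasSum_iff ?_).1 ?_)).tsum_eq
    · rintro m hm
      refine indicator_of_notMem ?_ _
      rintro ⟨j, -, rfl⟩
      exact hm ⟨j, rfl⟩
    · simpa only [Function.comp_def, indicator_image hg] using hS

theorem stmt4_general (x : ℕ → ℝ) (hpos : ∀ n, 0 < x n)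
    (hsum : Summable x) (hIF : ∀ n, x n ≤ tailSum x n)
    (k : ℕ) (hk : x k < tailSum x k) :
    ∃ t ∈ achSet x, 3 ≤ cardFun x t := by
  have hnn n : 0 ≤ x n := (hpos n).le
  obtain ⟨n, hkn, hn⟩ : ∃ n, k < n ∧ x n < tailSum x k - x k :=
    ((eventually_gt_atTop k).and
      (hsum.tendsto_atTop_zero.eventually_lt_const (sub_pos.2 hk))).exists
  obtain ⟨T, hTn, hT⟩ := exists_subset_Ioi_tsum_eq hnn hsum hIF (hnn n) (hIF n)
  obtain ⟨U, hUk, hU⟩ := exists_subset_Ioi_tsum_eq hnn hsum hIF (n := k)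
    (add_nonneg (hnn k) (hnn n)) (by linarith)
  have hkU : k ∉ U := fun h => lt_irrefl k (hUk h)
  have hnT : n ∉ insert k T := by
    rintro (h | h)
    · exact hkn.ne' h
    · exact lt_irrefl n (hTn h)
  refine ⟨x k + x n, ⟨U, hU⟩,
    Cardinal.three_le_mk_subtype (a := {k, n}) (b := insert k T) (c := U) ?_ ?_ hU ?_ ?_ ?_⟩
  · rw [hsum.tsum_insert_of_notMem (by simpa using hkn.ne), tsum_singleton]
  · rw [hsum.tsum_insert_of_notMem fun h => lt_asymm hkn (hTn h), hT]
  · exact fun h => hnT (h ▸ mem_insert_of_mem k rfl)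
  · exact fun h => hkU (h ▸ mem_insert k _)
  · exact fun h => hkU (h ▸ mem_insert k _)

theorem stmt4 (x : ℕ → ℝ) (hpos : ∀ n, 0 < x n) (hanti : ∀ n, x (n + 1) ≤ x n)
    (hsum : Summable x) (hIF : ∀ n, x n ≤ tailSum x n)
    (k : ℕ) (hk : x k < tailSum x k) :
    ∃ t ∈ achSet x, 3 ≤ cardFun x t :=
  stmt4_general x hpos hsum hIF k hk
end

section
/- Let (x_n) be an interval-filling sequence of positive reals with cardinal function f, and suppose the set { n : r_n > x_n } has at most k elements, where r_n = ∑_{m>n} x_m. Then f(x) ≤ 2^{k+1} for every x in the achievement set. -/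
open Set

/-- Auxiliary: sum of `x` over a subset, via indicators. -/
noncomputable def gsum (x : ℕ → ℝ) (S : Set ℕ) : ℝ := ∑' m, S.indicator x m

lemma gsum_eq (x : ℕ → ℝ) (S : Set ℕ) : (∑' n : S, x n) = gsum x S := tsum_subtype S x

lemma gsum_mono (x : ℕ → ℝ) (hpos : ∀ n, 0 < x n) (hsum : Summable x) {S T : Set ℕ}
    (h : S ⊆ T) : gsum x S ≤ gsum x T :=
  Summable.tsum_le_tsum
    (fun a => Set.indicator_le_indicator_of_subset h (fun a => (hpos a).le) a)
    (hsum.indicator S) (hsum.indicator T)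

lemma gsum_union (x : ℕ → ℝ) (hsum : Summable x) {S T : Set ℕ} (h : Disjoint S T) :
    gsum x (S ∪ T) = gsum x S + gsum x T := by
  unfold gsum
  rw [Set.indicator_union_of_disjoint h]
  exact Summable.tsum_add (hsum.indicator S) (hsum.indicator T)

lemma gsum_singleton (x : ℕ → ℝ) (n : ℕ) : gsum x {n} = x n := by
  rw [← gsum_eq]; exact tsum_singleton n x

/-- Equivalence between `ℕ` and `Ioi n`. -/
def eIoi (n : ℕ) : ℕ ≃ (Set.Ioi n : Set ℕ) where
  toFun m := ⟨n + 1 + m, by simp only [Set.mem_Ioi]; omega⟩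
  invFun i := i.1 - (n + 1)
  left_inv m := by simp
  right_inv i := by
    have := i.2
    simp only [Set.mem_Ioi] at this
    ext
    simp only
    omega

lemma gsum_Ioi (x : ℕ → ℝ) (n : ℕ) : gsum x (Set.Ioi n) = tailSum x n := by
  rw [← gsum_eq]
  exact ((eIoi n).tsum_eq (fun i : Set.Ioi n => x i)).symm

lemma gsum_split (x : ℕ → ℝ) (hsum : Summable x) (S : Set ℕ) (n : ℕ) :
    gsum x S = gsum x (S ∩ Set.Iio n) + gsum x (S ∩ Set.Ici n) := by
  rw [← gsum_union x hsum (Set.disjoint_of_subset Set.inter_subset_right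
      Set.inter_subset_right (Set.Iio_disjoint_Ici le_rfl)),
    ← Set.inter_union_distrib_left, Set.Iio_union_Ici, Set.inter_univ]

lemma gsum_pos (x : ℕ → ℝ) (hpos : ∀ n, 0 < x n) (hsum : Summable x) {A : Set ℕ} {m : ℕ}
    (hm : m ∈ A) : 0 < gsum x A :=
  Summable.tsum_pos (hsum.indicator A)
    (fun i => Set.indicator_nonneg (fun a _ => (hpos a).le) i) m
    (by rw [Set.indicator_of_mem hm]; exact hpos m)

lemma eq_empty_of_gsum (x : ℕ → ℝ) (hpos : ∀ n, 0 < x n) (hsum : Summable x) {A : Set ℕ}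
    (h : gsum x A = 0) : A = ∅ := by
  by_contra hne
  obtain ⟨m, hm⟩ := Set.nonempty_iff_ne_empty.2 hne
  exact (gsum_pos x hpos hsum hm).ne' h

/-- The key analytic step: if two representations agree below `n`, differ at `n` with `n ∈ S`,
and `x n` equals the tail sum, then `S` stops at `n` and `T` contains everything beyond `n`. -/
lemma main_step (x : ℕ → ℝ) (hpos : ∀ n, 0 < x n) (hsum : Summable x)
    (hIF : ∀ n, x n ≤ tailSum x n) (S T : Set ℕ) (hST : gsum x S = gsum x T)
    (n : ℕ) (hnS : n ∈ S) (hnT : n ∉ T) (hlow : S ∩ Set.Iio n = T ∩ Set.Iio n)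
    (hnF : ¬ x n < tailSum x n) :
    S ⊆ Set.Iic n ∧ Set.Ioi n ⊆ T := by
  have hxr : x n = tailSum x n := le_antisymm (hIF n) (not_lt.1 hnF)
  have h1 : gsum x (S ∩ Set.Ici n) = gsum x (T ∩ Set.Ici n) := by
    have e1 := gsum_split x hsum S n
    have e2 := gsum_split x hsum T n
    rw [hlow] at e1
    linarith
  have hTIci : T ∩ Set.Ici n = T ∩ Set.Ioi n := by
    ext m
    simp only [Set.mem_inter_iff, Set.mem_Ici, Set.mem_Ioi]
    constructor
    · rintro ⟨h1, h2⟩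
      rcases h2.lt_or_eq with h | h
      · exact ⟨h1, h⟩
      · exact absurd (h ▸ h1) hnT
    · rintro ⟨h1, h2⟩
      exact ⟨h1, h2.le⟩
  have hSdecomp : S ∩ Set.Ici n = {n} ∪ (S ∩ Set.Ioi n) := by
    ext m
    simp only [Set.mem_inter_iff, Set.mem_Ici, Set.mem_union, Set.mem_singleton_iff,
      Set.mem_Ioi]
    constructor
    · rintro ⟨h1, h2⟩
      rcases h2.lt_or_eq with h | h
      · exact Or.inr ⟨h1, h⟩
      · exact Or.inl h.symm
    · rintro (rfl | ⟨h1, h2⟩)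
      exacts [⟨hnS, le_rfl⟩, ⟨h1, h2.le⟩]
  have hdisj1 : Disjoint ({n} : Set ℕ) (S ∩ Set.Ioi n) := by
    rw [Set.disjoint_left]
    rintro m rfl ⟨_, hm2⟩
    exact lt_irrefl m hm2
  have h2 : x n ≤ gsum x (S ∩ Set.Ici n) := by
    have := gsum_mono x hpos hsum (show ({n} : Set ℕ) ⊆ S ∩ Set.Ici n by
      rintro m rfl; exact ⟨hnS, Set.mem_Ici.2 le_rfl⟩)
    rwa [gsum_singleton] at this
  have h3 : gsum x (T ∩ Set.Ioi n) ≤ tailSum x n := by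
    rw [← gsum_Ioi]
    exact gsum_mono x hpos hsum Set.inter_subset_right
  -- all equalities
  have key : gsum x (S ∩ Set.Ici n) = x n := by
    rw [hTIci] at h1
    linarith [hxr ▸ h3, h1 ▸ h2]
  have hTfull : gsum x (T ∩ Set.Ioi n) = tailSum x n := by
    rw [hTIci] at h1
    linarith [h1 ▸ h2, hxr]
  constructor
  · -- S ⊆ Iic n
    have : gsum x (S ∩ Set.Ioi n) = 0 := by
      have := gsum_union x hsum hdisj1
      rw [← hSdecomp, key, gsum_singleton] at this
      linarith
    have hempty := eq_empty_of_gsum x hpos hsum this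
    intro m hm
    by_contra hmn
    have : m ∈ S ∩ Set.Ioi n := ⟨hm, by simpa [Set.mem_Ioi] using hmn⟩
    rw [hempty] at this
    exact this
  · -- Ioi n ⊆ T
    have hdecomp : Set.Ioi n = (Set.Ioi n ∩ T) ∪ (Set.Ioi n \ T) :=
      (Set.inter_union_diff _ _).symm
    have hdisj2 : Disjoint (Set.Ioi n ∩ T) (Set.Ioi n \ T) := by
      rw [Set.disjoint_left]
      rintro m ⟨_, hm2⟩ ⟨_, hm4⟩
      exact hm4 hm2
    have : gsum x (Set.Ioi n \ T) = 0 := by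
      have e := gsum_union x hsum hdisj2
      rw [← hdecomp, gsum_Ioi, Set.inter_comm, hTfull] at e
      linarith
    have hempty := eq_empty_of_gsum x hpos hsum this
    intro m hm
    by_contra hmT
    have : m ∈ Set.Ioi n \ T := ⟨hm, hmT⟩
    rw [hempty] at this
    exact this

/-- Two distinct representations agreeing on the exceptional set: one is finite,
the other infinite. -/
lemma dichotomy (x : ℕ → ℝ) (hpos : ∀ n, 0 < x n) (hsum : Summable x)
    (hIF : ∀ n, x n ≤ tailSum x n) (S T : Set ℕ) (hne : S ≠ T)
    (hST : gsum x S = gsum x T)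
    (hF : ∀ m, x m < tailSum x m → (m ∈ S ↔ m ∈ T)) :
    (S.Finite ∧ T.Infinite) ∨ (T.Finite ∧ S.Infinite) := by
  classical
  have hex : ∃ m, ¬ (m ∈ S ↔ m ∈ T) := by
    by_contra h
    push_neg at h
    exact hne (Set.ext h)
  set n := Nat.find hex with hn
  have hnspec : ¬ (n ∈ S ↔ n ∈ T) := Nat.find_spec hex
  have hlow : S ∩ Set.Iio n = T ∩ Set.Iio n := by
    ext m
    simp only [Set.mem_inter_iff, Set.mem_Iio]
    have : ∀ m < n, (m ∈ S ↔ m ∈ T) := fun m hm => not_not.1 (Nat.find_min hex hm)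
    constructor
    · rintro ⟨h1, h2⟩; exact ⟨(this m h2).1 h1, h2⟩
    · rintro ⟨h1, h2⟩; exact ⟨(this m h2).2 h1, h2⟩
  have hnF : ¬ x n < tailSum x n := fun h => hnspec (hF n h)
  by_cases hnS : n ∈ S
  · have hnT : n ∉ T := fun h => hnspec ⟨fun _ => h, fun _ => hnS⟩
    obtain ⟨hS1, hT1⟩ := main_step x hpos hsum hIF S T hST n hnS hnT hlow hnF
    exact Or.inl ⟨(Set.finite_Iic n).subset hS1, (Set.Ioi_infinite n).mono hT1⟩
  · have hnT : n ∈ T := by tauto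
    obtain ⟨hT1, hS1⟩ := main_step x hpos hsum hIF T S hST.symm n hnT hnS hlow.symm hnF
    exact Or.inr ⟨(Set.finite_Iic n).subset hT1, (Set.Ioi_infinite n).mono hS1⟩

theorem stmt10 (x : ℕ → ℝ) (hpos : ∀ n, 0 < x n) (hanti : ∀ n, x (n + 1) ≤ x n)
    (hsum : Summable x) (hIF : ∀ n, x n ≤ tailSum x n)
    (k : ℕ) (hcard : {n : ℕ | x n < tailSum x n}.encard ≤ k) :
    ∀ t ∈ achSet x, cardFun x t ≤ ((2 ^ (k + 1) : ℕ) : Cardinal) := by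
  classical
  intro t _
  set F := {n : ℕ | x n < tailSum x n} with hFdef
  have hFfin : F.Finite := Set.finite_of_encard_le_coe hcard
  have hFk : F.ncard ≤ k := (Set.encard_le_coe_iff_finite_ncard_le.1 hcard).2
  letI : Fintype F := hFfin.fintype
  let φ : {S : Set ℕ // ∑' n : S, x n = t} → (F → Prop) × Prop :=
    fun S => (fun i => (i : ℕ) ∈ S.1, S.1.Finite)
  have hinj : Function.Injective φ := by
    rintro ⟨S, hS⟩ ⟨T, hT⟩ h
    simp only [φ, Prod.mk.injEq] at h
    obtain ⟨h1, h2⟩ := h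
    ext1
    by_contra hne
    have hFiff : ∀ m, x m < tailSum x m → (m ∈ S ↔ m ∈ T) := fun m hm =>
      iff_of_eq (congrFun h1 ⟨m, hm⟩)
    have hsums : gsum x S = gsum x T := by rw [← gsum_eq, ← gsum_eq, hS, hT]
    rcases dichotomy x hpos hsum hIF S T hne hsums hFiff with ⟨hf, hi⟩ | ⟨hf, hi⟩
    · exact hi (h2 ▸ hf)
    · exact hi (h2.symm ▸ hf)
  have hcardle : cardFun x t ≤ Cardinal.mk ((F → Prop) × Prop) :=
    Cardinal.mk_le_of_injective hinj
  have hcardeq : Cardinal.mk ((F → Prop) × Prop)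
      = (Fintype.card ((F → Prop) × Prop) : Cardinal) := Cardinal.mk_fintype _
  refine hcardle.trans (hcardeq ▸ ?_)
  rw [Nat.cast_le]
  have hfc : Fintype.card ((F → Prop) × Prop) = 2 ^ Fintype.card F * 2 := by
    rw [Fintype.card_prod, Fintype.card_fun, Fintype.card_prop]
  have hc : Fintype.card F ≤ k := by
    rw [← Nat.card_eq_fintype_card, Nat.card_coe_set_eq]
    exact hFk
  rw [hfc]
  calc 2 ^ Fintype.card F * 2 ≤ 2 ^ k * 2 :=
        Nat.mul_le_mul_right 2 (Nat.pow_le_pow_right (by norm_num) hc)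
    _ = 2 ^ (k + 1) := by ring
end

section
/- Let (x_n) be a summable sequence of positive reals with cardinal function f, and let y > 0 be an element of the achievement set A(x) which lies in Cis(x) (i.e., prepending y to the sequence does not change the range of the cardinal function). If f is bounded, then f(y) < max rng(f). -/
open Set

lemma prepend_summable {y : ℝ} {x : ℕ → ℝ} (hsum : Summable x) :
    Summable (prepend y x) := by
  have : Summable (fun n => prepend y x (n + 1)) := hsum
  exact (summable_nat_add_iff 1).mp this

lemma prepend_nonneg {y : ℝ} {x : ℕ → ℝ} (hy : 0 ≤ y) (hpos : ∀ n, 0 < x n) (n : ℕ) :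
    0 ≤ prepend y x n := by
  cases n with
  | zero => exact hy
  | succ m => exact (hpos m).le

/-- Equivalence between `{m | m+1 ∈ S}` and `S` when `0 ∉ S`. -/
def succEquiv (S : Set ℕ) (h0 : 0 ∉ S) : {m | m + 1 ∈ S} ≃ S where
  toFun := fun m => ⟨m.1 + 1, m.2⟩
  invFun := fun n => ⟨n.1 - 1, by
    have hn : n.1 ≠ 0 := fun h => h0 (h ▸ n.2)
    have : n.1 - 1 + 1 = n.1 := Nat.succ_pred_eq_of_pos (Nat.pos_of_ne_zero hn)
    show n.1 - 1 + 1 ∈ S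
    rw [this]; exact n.2⟩
  left_inv := fun m => Subtype.ext (by simp)
  right_inv := fun n => Subtype.ext (by
    have hn : n.1 ≠ 0 := fun h => h0 (h ▸ n.2)
    exact Nat.succ_pred_eq_of_pos (Nat.pos_of_ne_zero hn))

lemma tsum_prepend_of_notMem {y : ℝ} {x : ℕ → ℝ} (S : Set ℕ) (h0 : 0 ∉ S) :
    ∑' n : S, prepend y x n = ∑' m : {m | m + 1 ∈ S}, x m := by
  rw [← (succEquiv S h0).tsum_eq (fun n : S => prepend y x n)]
  rfl

lemma eq_singleton_of_mem {y : ℝ} {x : ℕ → ℝ} (hy : 0 < y) (hpos : ∀ n, 0 < x n)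
    (hsum : Summable x) (S : Set ℕ) (h0 : 0 ∈ S)
    (hS : ∑' n : S, prepend y x n = y) : S = ({0} : Set ℕ) := by
  have hsub : Summable ((prepend y x) ∘ (Subtype.val : S → ℕ)) :=
    (prepend_summable hsum).subtype S
  ext n
  simp only [mem_singleton_iff]
  constructor
  · intro hn
    by_contra hne
    obtain ⟨m, rfl⟩ := Nat.exists_eq_succ_of_ne_zero hne
    have hne' : (⟨0, h0⟩ : S) ≠ ⟨m + 1, hn⟩ := by
      intro h
      exact hne (congrArg Subtype.val h).symm
    have hle : ∑ i ∈ ({⟨0, h0⟩, ⟨m + 1, hn⟩} : Finset S), prepend y x i.1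
        ≤ ∑' i : S, prepend y x i.1 :=
      Summable.sum_le_tsum _ (fun i _ => prepend_nonneg hy.le hpos i.1) hsub
    rw [Finset.sum_pair hne', hS] at hle
    have : prepend y x 0 + prepend y x (m + 1) = y + x m := rfl
    rw [this] at hle
    linarith [hpos m]
  · intro hn; rw [hn]; exact h0

/-- The key counting equivalence. -/
noncomputable def prependEquiv {y : ℝ} {x : ℕ → ℝ} (hy : 0 < y) (hpos : ∀ n, 0 < x n)
    (hsum : Summable x) :
    Option {T : Set ℕ // ∑' n : T, x n = y} ≃ {S : Set ℕ // ∑' n : S, prepend y x n = y} := by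
  have succ_inj : Function.Injective (fun m : ℕ => m + 1) := fun a b h => Nat.succ_injective h
  refine Equiv.ofBijective (fun o => o.elim
    ⟨({0} : Set ℕ), by
      have := tsum_singleton (0 : ℕ) (prepend y x)
      exact this⟩
    (fun T => ⟨(fun m => m + 1) '' T.1, by
      have h0 : (0 : ℕ) ∉ (fun m => m + 1) '' T.1 := by
        rintro ⟨m, _, h⟩; exact Nat.succ_ne_zero m h
      rw [tsum_prepend_of_notMem _ h0]
      have hset : {m | m + 1 ∈ (fun m => m + 1) '' T.1} = T.1 := by
        ext m
        simp only [mem_setOf_eq, mem_image]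
        constructor
        · rintro ⟨a, ha, h⟩
          have h' : a + 1 = m + 1 := h
          have : a = m := by omega
          rwa [← this]
        · intro hm; exact ⟨m, hm, rfl⟩
      rw [hset]
      exact T.2⟩)) ⟨?_, ?_⟩
  · -- injective
    intro a b hab
    match a, b with
    | none, none => rfl
    | none, some T =>
        exfalso
        have h := congrArg Subtype.val hab
        simp only [Option.elim] at h
        have : (0 : ℕ) ∈ (fun m => m + 1) '' T.1 := by rw [← h]; exact rfl
        obtain ⟨m, _, hm⟩ := this
        exact Nat.succ_ne_zero m hm
    | some T, none =>
        exfalso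
        have h := congrArg Subtype.val hab
        simp only [Option.elim] at h
        have : (0 : ℕ) ∈ (fun m => m + 1) '' T.1 := by rw [h]; exact rfl
        obtain ⟨m, _, hm⟩ := this
        exact Nat.succ_ne_zero m hm
    | some T, some T' =>
        have h := congrArg Subtype.val hab
        simp only [Option.elim] at h
        have := Set.image_injective.mpr succ_inj h
        exact congrArg _ (Subtype.ext this)
  · -- surjective
    rintro ⟨S, hS⟩
    by_cases h0 : (0 : ℕ) ∈ S
    · refine ⟨none, ?_⟩
      have := eq_singleton_of_mem hy hpos hsum S h0 hS
      exact Subtype.ext this.symm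
    · refine ⟨some ⟨{m | m + 1 ∈ S}, ?_⟩, ?_⟩
      · rw [← tsum_prepend_of_notMem S h0]; exact hS
      · apply Subtype.ext
        show (fun m => m + 1) '' {m | m + 1 ∈ S} = S
        ext n
        simp only [mem_image, mem_setOf_eq]
        constructor
        · rintro ⟨m, hm, rfl⟩; exact hm
        · intro hn
          have hne : n ≠ 0 := fun h => h0 (h ▸ hn)
          obtain ⟨m, rfl⟩ := Nat.exists_eq_succ_of_ne_zero hne
          exact ⟨m, hn, rfl⟩

lemma cardFun_prepend {y : ℝ} {x : ℕ → ℝ} (hy : 0 < y) (hpos : ∀ n, 0 < x n)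
    (hsum : Summable x) : cardFun (prepend y x) y = cardFun x y + 1 := by
  unfold cardFun
  rw [← Cardinal.mk_option]
  exact (Cardinal.mk_congr (prependEquiv hy hpos hsum)).symm

theorem stmt12 (x : ℕ → ℝ) (hpos : ∀ n, 0 < x n) (hsum : Summable x)
    (N : ℕ) (hbdd : ∀ t ∈ achSet x, cardFun x t ≤ N)
    (y : ℝ) (hy : 0 < y) (hyA : y ∈ achSet x)
    (hCis : cardFun (prepend y x) '' achSet (prepend y x) = cardFun x '' achSet x) :
    ∃ t ∈ achSet x, cardFun x y < cardFun x t := by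
  have hyA' : y ∈ achSet (prepend y x) := ⟨({0} : Set ℕ), by have := tsum_singleton (0 : ℕ) (prepend y x); exact this⟩
  have hmem : cardFun (prepend y x) y ∈ cardFun x '' achSet x := by
    rw [← hCis]
    exact mem_image_of_mem _ hyA'
  obtain ⟨t, htA, ht⟩ := hmem
  refine ⟨t, htA, ?_⟩
  rw [ht, cardFun_prepend hy hpos hsum]
  obtain ⟨m, hm⟩ := Cardinal.lt_aleph0.mp
    (lt_of_le_of_lt (hbdd y hyA) (Cardinal.nat_lt_aleph0 N))
  rw [hm]
  have : ((m : Cardinal) + 1) = ((m + 1 : ℕ) : Cardinal) := by norm_cast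
  rw [this]
  exact_mod_cast Nat.lt_succ_self m
end

section
/- For every finite sequence of positive reals there exists a finite sequence of positive integers whose cardinal function has the same range. That is, if M is the range of the cardinal function of some finite positive real sequence, then M is also the range of the cardinal function of some finite sequence of positive integers. -/
/-!
Additive relations among the `x i` are `ℚ`-linear relations inside the finite-dimensional
`ℚ`-span `V` of the `x i`, so every `ℚ`-linear map `V → ℝ` preserves them. The maps sending a basis
of `V` to rationals take rational values, and they are dense around the inclusion `V → ℝ`; one close
enough to it keeps the finitely many open conditions `0 < x i` and `∑ S x ≠ ∑ T x`. Clearing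
denominators then yields positive integers whose subset sums coincide exactly when those of `x` do,
so both cardinal functions take the same values.
-/

open Set

/-- The achievement set of a finite sequence. -/
def achSetF {N : ℕ} (x : Fin N → ℝ) : Set ℝ :=
  {t | ∃ S : Finset (Fin N), ∑ n ∈ S, x n = t}

/-- The cardinal function of a finite sequence. -/
noncomputable def cardFunF {N : ℕ} (x : Fin N → ℝ) (t : ℝ) : ℕ :=
  Nat.card {S : Finset (Fin N) // ∑ n ∈ S, x n = t}

lemma cardFunF_image_achSetF_eq_range {N : ℕ} (x : Fin N → ℝ) :
    cardFunF x '' achSetF x =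
      range fun T : Finset (Fin N) =>
        Nat.card {S : Finset (Fin N) // ∑ n ∈ S, x n = ∑ n ∈ T, x n} := by
  ext k
  constructor
  · rintro ⟨t, ⟨T, rfl⟩, rfl⟩
    exact ⟨T, rfl⟩
  · rintro ⟨T, rfl⟩
    exact ⟨_, ⟨T, rfl⟩, rfl⟩

lemma cardFunF_image_achSetF_congr {N : ℕ} {x z : Fin N → ℝ}
    (h : ∀ S T : Finset (Fin N), ∑ n ∈ S, x n = ∑ n ∈ T, x n ↔ ∑ n ∈ S, z n = ∑ n ∈ T, z n) :
    cardFunF x '' achSetF x = cardFunF z '' achSetF z := by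
  simp only [cardFunF_image_achSetF_eq_range]
  congr! 2 with T
  exact Nat.card_congr (Equiv.subtypeEquivRight fun S => h S T)

lemma exists_ratCast_mem_of_isOpen_of_relations {ι : Type*} [Fintype ι] (x : ι → ℝ)
    {U : Set (ι → ℝ)} (hU : IsOpen U) (hxU : x ∈ U) :
    ∃ r : ι → ℚ, (fun i => (r i : ℝ)) ∈ U ∧
      ∀ a : ι → ℚ, ∑ i, a i * x i = 0 → ∑ i, a i * r i = 0 := by
  set V := Submodule.span ℚ (range x)
  have : Module.Finite ℚ V := .span_of_finite ℚ (finite_range x)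
  let xV : ι → V := fun i => ⟨x i, Submodule.subset_span ⟨i, rfl⟩⟩
  let b := Module.Free.chooseBasis ℚ V
  let F : (Module.Free.ChooseBasisIndex ℚ V → ℝ) → ι → ℝ :=
    fun w i => ∑ j, b.equivFun (xV i) j * w j
  have hF : Continuous F := by fun_prop
  have hFb : F (fun j => b j) = x := by
    funext i
    have := congrArg Subtype.val (b.sum_equivFun (xV i))
    simpa only [Submodule.coe_sum, Submodule.coe_smul, Rat.smul_def] using this
  have hdense : DenseRange fun (q : Module.Free.ChooseBasisIndex ℚ V → ℚ) j => (q j : ℝ) :=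
    DenseRange.piMap fun _ => Rat.denseRange_cast
  obtain ⟨q, hqU⟩ := hdense.exists_mem_open (hU.preimage hF) ⟨_, (hFb ▸ hxU : _)⟩
  refine ⟨fun i => b.constr ℚ q (xV i), ?_, fun a ha => ?_⟩
  · convert hqU using 2 with i
    simp [F, mul_comm]
  · have : ∑ i, a i • xV i = 0 := Subtype.ext (by simpa [xV, Rat.smul_def] using ha)
    simpa using congrArg (b.constr ℚ q) this

lemma exists_pos_rat_sum_eq_sum_iff {ι : Type*} [Fintype ι] (x : ι → ℝ) (hpos : ∀ i, 0 < x i) :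
    ∃ r : ι → ℚ, (∀ i, 0 < r i) ∧ ∀ S T : Finset ι,
      ∑ n ∈ S, x n = ∑ n ∈ T, x n ↔ ∑ n ∈ S, (r n : ℝ) = ∑ n ∈ T, (r n : ℝ) := by
  classical
  let U : Set (ι → ℝ) := {v | (∀ i, 0 < v i) ∧
    ∀ S T : Finset ι, ∑ n ∈ S, x n ≠ ∑ n ∈ T, x n → ∑ n ∈ S, v n ≠ ∑ n ∈ T, v n}
  have hU : IsOpen U := by
    simp only [U, ofPred_and, ofPred_forall]
    refine (isOpen_iInter_of_finite fun i => isOpen_lt continuous_const (continuous_apply i)).inter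
      (isOpen_iInter_of_finite fun S => isOpen_iInter_of_finite fun T => ?_)
    by_cases hST : ∑ n ∈ S, x n = ∑ n ∈ T, x n
    · simp [hST]
    · simpa [hST] using isOpen_ne_fun (by fun_prop) (by fun_prop)
  obtain ⟨r, ⟨hr_pos, hr_ne⟩, hr_rel⟩ :=
    exists_ratCast_mem_of_isOpen_of_relations x hU ⟨hpos, fun _ _ h => h⟩
  refine ⟨r, fun i => Rat.cast_pos.mp (hr_pos i), fun S T => ⟨fun h => ?_, fun h => ?_⟩⟩
  · have := hr_rel (fun i => (if i ∈ S then 1 else 0) - (if i ∈ T then 1 else 0))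
      (by simp [apply_ite (Rat.cast : ℚ → ℝ), sub_mul, ite_mul, h])
    simp only [sub_mul, Finset.sum_sub_distrib, ite_mul, one_mul, zero_mul, Finset.sum_ite_mem,
      Finset.univ_inter, sub_eq_zero] at this
    exact_mod_cast this
  · by_contra hne
    exact hr_ne S T hne h

lemma exists_pos_nat_forall_natCast_eq_mul {ι : Type*} [Fintype ι] (r : ι → ℚ)
    (hr : ∀ i, 0 ≤ r i) : ∃ D : ℕ, 0 < D ∧ ∃ y : ι → ℕ, ∀ i, (y i : ℚ) = D * r i := by
  refine ⟨∏ i, (r i).den, Finset.prod_pos fun i _ => (r i).pos,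
    fun i => (r i).num.toNat * ((∏ j, (r j).den) / (r i).den), fun i => ?_⟩
  have hdvd : (r i).den ∣ ∏ j, (r j).den := Finset.dvd_prod_of_mem _ (Finset.mem_univ i)
  have hnum : (((r i).num.toNat : ℤ) : ℚ) = (r i).num := by
    rw [Int.toNat_of_nonneg (Rat.num_nonneg.mpr (hr i))]
  rw [Nat.cast_mul, Nat.cast_div hdvd (by simp), ← Int.cast_natCast, hnum]
  nth_rw 3 [← Rat.num_div_den (r i)]
  ring

theorem stmt17 (N : ℕ) (x : Fin N → ℝ) (hpos : ∀ i, 0 < x i) :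
    ∃ (M : ℕ) (y : Fin M → ℕ), (∀ i, 0 < y i) ∧
      cardFunF x '' achSetF x =
        cardFunF (fun i => (y i : ℝ)) '' achSetF (fun i => (y i : ℝ)) := by
  obtain ⟨r, hr_pos, hr⟩ := exists_pos_rat_sum_eq_sum_iff x hpos
  obtain ⟨D, hD, y, hy⟩ := exists_pos_nat_forall_natCast_eq_mul r fun i => (hr_pos i).le
  have hyR (i : Fin N) : (y i : ℝ) = D * r i := by exact_mod_cast hy i
  refine ⟨N, y, fun i => ?_, cardFunF_image_achSetF_congr fun S T => ?_⟩
  · have : (0 : ℚ) < y i := by rw [hy]; exact mul_pos (by exact_mod_cast hD) (hr_pos i)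
    exact_mod_cast this
  · simp only [hr, hyR, ← Finset.mul_sum]
    exact (mul_right_inj' (by positivity)).symm
end
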